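/- Let f(x₁,…,x₇) = x₁x₂x₃ + 2x₄x₅x₆ − x₁x₆² − x₂x₅² − x₃x₄² − x₇², and let Φ : ℂ⁷ → ℂ⁷ be the polynomial map Φ(α₁,…,α₇) = (α₁α₃, α₁α₃(α₂+α₄²), α₁α₃(α₂α₃+α₂α₆²+α₅²), α₁α₃α₄, α₁α₃α₅, α₁α₃(α₂α₆+α₄α₅), α₁α₂α₃²α₇). Then f(Φ(α)) = α₁²·α₂²·α₃⁴·(α₁ − α₇²) identically as polynomials in α₁,…,α₇. -/
import Mathlib


open MvPolynomial

/-- f = x₁x₂x₃ + 2x₄x₅x₆ − x₁x₆² − x₂x₅² − x₃x₄² − x₇². -/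
noncomputable def fPoly : MvPolynomial (Fin 7) ℂ :=
  X 0 * X 1 * X 2 + 2 * X 3 * X 4 * X 5
    - X 0 * X 5 ^ 2 - X 1 * X 4 ^ 2 - X 2 * X 3 ^ 2 - X 6 ^ 2

/-- The components of the map Φ : ℂ⁷ → ℂ⁷,
Φ(α₁,…,α₇) = (α₁α₃, α₁α₃(α₂+α₄²), α₁α₃(α₂α₃+α₂α₆²+α₅²), α₁α₃α₄, α₁α₃α₅,
α₁α₃(α₂α₆+α₄α₅), α₁α₂α₃²α₇), as polynomials in α₁,…,α₇ (indexed by `Fin 7`). -/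
noncomputable def PhiPoly : Fin 7 → MvPolynomial (Fin 7) ℂ :=
  ![X 0 * X 2,
    X 0 * X 2 * (X 1 + X 3 ^ 2),
    X 0 * X 2 * (X 1 * X 2 + X 1 * X 5 ^ 2 + X 4 ^ 2),
    X 0 * X 2 * X 3,
    X 0 * X 2 * X 4,
    X 0 * X 2 * (X 1 * X 5 + X 3 * X 4),
    X 0 * X 1 * X 2 ^ 2 * X 6]

lemma Phi0 : PhiPoly 0 = X 0 * X 2 := rfl
lemma Phi1 : PhiPoly 1 = X 0 * X 2 * (X 1 + X 3 ^ 2) := rfl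
lemma Phi2 : PhiPoly 2 = X 0 * X 2 * (X 1 * X 2 + X 1 * X 5 ^ 2 + X 4 ^ 2) := rfl
lemma Phi3 : PhiPoly 3 = X 0 * X 2 * X 3 := rfl
lemma Phi4 : PhiPoly 4 = X 0 * X 2 * X 4 := rfl
lemma Phi5 : PhiPoly 5 = X 0 * X 2 * (X 1 * X 5 + X 3 * X 4) := rfl
lemma Phi6 : PhiPoly 6 = X 0 * X 1 * X 2 ^ 2 * X 6 := rfl

/-- f(Φ(α)) = α₁²·α₂²·α₃⁴·(α₁ − α₇²) identically as polynomials in α₁,…,α₇. -/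
theorem f_comp_Phi :
    MvPolynomial.bind₁ PhiPoly fPoly
      = X 0 ^ 2 * X 1 ^ 2 * X 2 ^ 4 * (X 0 - X 6 ^ 2) := by
  simp only [fPoly, map_add, map_sub, map_mul, map_pow, map_ofNat,
    bind₁_X_right, Phi0, Phi1, Phi2, Phi3, Phi4, Phi5, Phi6]
  ring
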